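/- arXiv:1403.1603 — 3 statements merged into one kernel-verified Lean document; each statement's English description precedes it below -/
import Mathlib

section
/- Let d ≥ 1, κ ≥ 1, α ≥ 0 and 0 ≤ s < t. There exists a constant C depending only on α and κ (one may take C = e^{1/2}(2α/(eκ))^{α/κ}) such that for every measurable w : ℝ^d → ℂ, ∫_{ℝ^d} ‖ξ‖^α e^{(1/2)t^{1/κ}‖ξ‖} e^{−(t−s)‖ξ‖^κ} |w(ξ)| dξ ≤ C (t−s)^{−α/κ} ∫_{ℝ^d} e^{(1/2)s^{1/κ}‖ξ‖} |w(ξ)| dξ. -/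
/-!
The estimate is pointwise in `ξ`. With `r = ‖ξ‖` and `τ = t - s`, subadditivity of `x ↦ x ^ (1/κ)`
gives `t ^ (1/κ) ≤ s ^ (1/κ) + τ ^ (1/κ)`, so it suffices to bound
`r ^ α * exp (τ ^ (1/κ) * r / 2 - τ * r ^ κ)` by `C * τ ^ (-α/κ)`. Substituting `y = τ ^ (1/κ) * r`
removes `τ`; then `y ≤ 1 + y ^ κ` trades the linear term for `1/2 - y ^ κ / 2`, and the remaining
`y ^ α * exp (-y ^ κ / 2)` is maximised by the elementary bound `x ^ β ≤ (β / e) ^ β * exp x`.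
-/

open MeasureTheory Real
open scoped ENNReal

lemma rpow_le_div_exp_one_rpow_mul_exp {x β : ℝ} (hx : 0 ≤ x) (hβ : 0 ≤ β) :
    x ^ β ≤ (β / exp 1) ^ β * exp x := by
  rcases hβ.eq_or_lt with rfl | hβ
  · simpa using one_le_exp hx
  have key : (x / β) ^ β ≤ exp (x - β) := by
    calc (x / β) ^ β ≤ exp (x / β - 1) ^ β := by
          gcongr
          linarith [add_one_le_exp (x / β - 1)]
      _ = exp (x - β) := by rw [← exp_mul]; field_simp
  calc x ^ β = β ^ β * (x / β) ^ β := by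
        rw [div_rpow hx hβ.le, mul_div_cancel₀ _ (rpow_pos_of_pos hβ β).ne']
    _ ≤ β ^ β * exp (x - β) := by gcongr
    _ = (β / exp 1) ^ β * exp x := by
        rw [div_rpow hβ.le (exp_nonneg 1), exp_one_rpow, exp_sub]; ring

lemma rpow_le_mul_exp_half_rpow {κ α y : ℝ} (hκ : 0 < κ) (hα : 0 ≤ α) (hy : 0 ≤ y) :
    y ^ α ≤ (2 * α / (exp 1 * κ)) ^ (α / κ) * exp (1 / 2 * y ^ κ) := by
  have h := rpow_le_div_exp_one_rpow_mul_exp (x := 1 / 2 * y ^ κ) (by positivity)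
    (div_nonneg hα hκ.le)
  have hpow : (1 / 2 * y ^ κ) ^ (α / κ) = y ^ α / 2 ^ (α / κ) := by
    rw [one_div_mul_eq_div, div_rpow (by positivity) (by norm_num), ← rpow_mul hy,
      mul_div_cancel₀ _ hκ.ne']
  have hconst : (2 * α / (exp 1 * κ)) ^ (α / κ) = 2 ^ (α / κ) * (α / κ / exp 1) ^ (α / κ) := by
    rw [← mul_rpow (by norm_num) (by positivity)]; congr 1; field_simp
  rw [hpow, div_le_iff₀' (by positivity)] at h
  rwa [hconst, mul_assoc]

lemma self_le_one_add_rpow {κ y : ℝ} (hκ : 1 ≤ κ) (hy : 0 ≤ y) : y ≤ 1 + y ^ κ := by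
  rcases le_total y 1 with h | h
  · linarith [rpow_nonneg hy κ]
  · linarith [rpow_one y ▸ rpow_le_rpow_of_exponent_le h hκ]

lemma rpow_mul_exp_half_sub_rpow_le {κ α y : ℝ} (hκ : 1 ≤ κ) (hα : 0 ≤ α) (hy : 0 ≤ y) :
    y ^ α * exp (1 / 2 * y - y ^ κ) ≤ exp (1 / 2) * (2 * α / (exp 1 * κ)) ^ (α / κ) := by
  have hexp : exp (1 / 2 * y - y ^ κ) ≤ exp (1 / 2) * exp (-(1 / 2 * y ^ κ)) := by
    rw [← exp_add, exp_le_exp]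
    linarith [self_le_one_add_rpow hκ hy]
  calc y ^ α * exp (1 / 2 * y - y ^ κ)
      ≤ (2 * α / (exp 1 * κ)) ^ (α / κ) * exp (1 / 2 * y ^ κ) *
          (exp (1 / 2) * exp (-(1 / 2 * y ^ κ))) := by
        gcongr
        exact rpow_le_mul_exp_half_rpow (by linarith) hα hy
    _ = exp (1 / 2) * (2 * α / (exp 1 * κ)) ^ (α / κ) := by
        rw [mul_left_comm, mul_assoc, ← exp_add, add_neg_cancel, exp_zero, mul_one]

lemma rpow_mul_exp_half_rpow_inv_mul_sub_le {κ α r τ : ℝ} (hκ : 1 ≤ κ) (hα : 0 ≤ α)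
    (hr : 0 ≤ r) (hτ : 0 < τ) :
    r ^ α * exp (1 / 2 * (τ ^ (1 / κ) * r) - τ * r ^ κ) ≤
      exp (1 / 2) * (2 * α / (exp 1 * κ)) ^ (α / κ) * τ ^ (-(α / κ)) := by
  have hκ0 : κ ≠ 0 := by positivity
  have hyα : (τ ^ (1 / κ) * r) ^ α = τ ^ (α / κ) * r ^ α := by
    rw [mul_rpow (by positivity) hr, ← rpow_mul hτ.le, one_div_mul_eq_div]
  have hyκ : (τ ^ (1 / κ) * r) ^ κ = τ * r ^ κ := by
    rw [mul_rpow (by positivity) hr, ← rpow_mul hτ.le, one_div_mul_cancel hκ0, rpow_one]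
  have h := rpow_mul_exp_half_sub_rpow_le hκ hα (mul_nonneg (rpow_nonneg hτ.le (1 / κ)) hr)
  rw [hyα, hyκ, mul_assoc, ← le_div_iff₀' (by positivity)] at h
  rwa [rpow_neg hτ.le, ← div_eq_mul_inv]

lemma rpow_inv_le_add_rpow_inv_sub {κ s t : ℝ} (hκ : 1 ≤ κ) (hs : 0 ≤ s) (hst : s ≤ t) :
    t ^ (1 / κ) ≤ s ^ (1 / κ) + (t - s) ^ (1 / κ) := by
  simpa using rpow_add_le_add_rpow hs (sub_nonneg.mpr hst) (by positivity)
    ((div_le_one (by positivity)).mpr hκ)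

lemma rpow_mul_exp_mul_exp_neg_le {κ α s t r : ℝ} (hκ : 1 ≤ κ) (hα : 0 ≤ α) (hs : 0 ≤ s)
    (hst : s < t) (hr : 0 ≤ r) :
    r ^ α * exp (1 / 2 * t ^ (1 / κ) * r) * exp (-((t - s) * r ^ κ)) ≤
      exp (1 / 2) * (2 * α / (exp 1 * κ)) ^ (α / κ) * (t - s) ^ (-(α / κ)) *
        exp (1 / 2 * s ^ (1 / κ) * r) := by
  have hexp : 1 / 2 * t ^ (1 / κ) * r + -((t - s) * r ^ κ) ≤
      (1 / 2 * ((t - s) ^ (1 / κ) * r) - (t - s) * r ^ κ) + 1 / 2 * s ^ (1 / κ) * r := by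
    nlinarith [mul_le_mul_of_nonneg_right (rpow_inv_le_add_rpow_inv_sub hκ hs hst.le) hr]
  calc r ^ α * exp (1 / 2 * t ^ (1 / κ) * r) * exp (-((t - s) * r ^ κ))
      ≤ r ^ α * exp (1 / 2 * ((t - s) ^ (1 / κ) * r) - (t - s) * r ^ κ) *
          exp (1 / 2 * s ^ (1 / κ) * r) := by
        rw [mul_assoc, ← exp_add, mul_assoc (r ^ α), ← exp_add]
        gcongr
    _ ≤ _ := mul_le_mul_of_nonneg_right
        (rpow_mul_exp_half_rpow_inv_mul_sub_le hκ hα hr (sub_pos.mpr hst)) (exp_nonneg _)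

/-- estimates (4.16)–(4.18): for `κ ≥ 1`, `α ≥ 0` there is a constant `C`
depending only on `α` and `κ` (one may take `C = e^{1/2} (2α/(eκ))^{α/κ}`) such that for
every `d ≥ 1`, `0 ≤ s < t` and measurable `w : ℝ^d → ℂ`,
`∫ ‖ξ‖^α e^{(1/2)t^{1/κ}‖ξ‖} e^{−(t−s)‖ξ‖^κ} |w(ξ)| dξ
   ≤ C (t−s)^{−α/κ} ∫ e^{(1/2)s^{1/κ}‖ξ‖} |w(ξ)| dξ`. -/
theorem stmt3 (κ α : ℝ) (hκ : 1 ≤ κ) (hα : 0 ≤ α) :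
    ∃ C : ℝ, C = Real.exp (1 / 2) * (2 * α / (Real.exp 1 * κ)) ^ (α / κ) ∧
      ∀ d : ℕ, 1 ≤ d → ∀ s t : ℝ, 0 ≤ s → s < t →
        ∀ w : EuclideanSpace ℝ (Fin d) → ℂ, Measurable w →
          (∫⁻ ξ, ENNReal.ofReal (‖ξ‖ ^ α * Real.exp (1 / 2 * t ^ (1 / κ) * ‖ξ‖) *
              Real.exp (-((t - s) * ‖ξ‖ ^ κ))) * (‖w ξ‖₊ : ℝ≥0∞))
            ≤ ENNReal.ofReal (C * (t - s) ^ (-(α / κ))) *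
              ∫⁻ ξ, ENNReal.ofReal (Real.exp (1 / 2 * s ^ (1 / κ) * ‖ξ‖)) *
                (‖w ξ‖₊ : ℝ≥0∞) := by
  refine ⟨_, rfl, fun d _ s t hs hst w _ => ?_⟩
  rw [← lintegral_const_mul' _ _ ENNReal.ofReal_ne_top]
  refine lintegral_mono fun ξ => ?_
  rw [← mul_assoc, ← ENNReal.ofReal_mul (by positivity)]
  exact mul_le_mul_left
    (ENNReal.ofReal_le_ofReal (rpow_mul_exp_mul_exp_neg_le hκ hα hs hst (norm_nonneg ξ))) _
end

section
/- Let d ≥ 1, γ ≥ 0, n ≥ 1. Let a : ℕ^n → ℂ be coefficients with a(0) = 0, set F_M(r) = ∑_{k∈ℕ^n} |a_k| r^{|k|} where |k| = k₁ + ⋯ + k_n, and R_M = sup{r ≥ 0 : F_M(r) < ∞}. Let 0 ≤ R < R_M and let w₁, …, w_n : ℝ^d → ℂ be measurable with ‖w_i‖_γ ≤ R for each i. Then ∑_{k∈ℕ^n, k≠0} |a_k| · ‖w₁^{*k₁} * ⋯ * w_n^{*k_n}‖_γ ≤ F_M(R) < ∞, where w₁^{*k₁} * ⋯ * w_n^{*k_n}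 denotes the convolution of k₁ copies of w₁, k₂ copies of w₂, …, k_n copies of w_n. -/
open MeasureTheory
open scoped ENNReal

/-!
The weight `e^{γ‖ξ‖}` is submultiplicative, `e^{γ‖ξ‖} ≤ e^{γ‖ξ - η‖} e^{γ‖η‖}`, so by Tonelli and
translation invariance of Lebesgue measure the weighted `L¹` norm is submultiplicative under
convolution. Hence `‖w₁^{*k₁} * ⋯ * w_n^{*k_n}‖_γ ≤ ∏ ‖w_i‖_γ^{k_i} ≤ R^{|k|}`, and summing against
`|a_k|` gives at most `F_M(R)`, which is finite because `F_M(r) < ∞` for some `r > R`.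
-/

/-- The exponentially weighted `L¹` (Gevrey) norm `‖w‖_γ = ∫ e^{γ‖ξ‖} |w(ξ)| dξ`. -/
noncomputable def gnorm (d : ℕ) (γ : ℝ) (w : EuclideanSpace ℝ (Fin d) → ℂ) : ℝ≥0∞ :=
  ∫⁻ ξ, ENNReal.ofReal (Real.exp (γ * ‖ξ‖)) * (‖w ξ‖₊ : ℝ≥0∞)

/-- Convolution on `ℝ^d`. -/
noncomputable def convE (d : ℕ) (u v : EuclideanSpace ℝ (Fin d) → ℂ) :
    EuclideanSpace ℝ (Fin d) → ℂ :=
  fun ξ => ∫ η, u (ξ - η) * v η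

/-- Convolution of a (nonempty) list of functions; the empty convolution is set to `0`. -/
noncomputable def convList (d : ℕ) :
    List (EuclideanSpace ℝ (Fin d) → ℂ) → EuclideanSpace ℝ (Fin d) → ℂ
  | [] => fun _ => 0
  | [f] => f
  | f :: g :: rest => convE d f (convList d (g :: rest))

/-- `multiConv d n w k` is the convolution `w₁^{*k₁} * ⋯ * w_n^{*k_n}` of `k₁` copies of
`w₁`, …, `k_n` copies of `w_n`. -/
noncomputable def multiConv (d n : ℕ) (w : Fin n → EuclideanSpace ℝ (Fin d) → ℂ)
    (k : Fin n → ℕ) : EuclideanSpace ℝ (Fin d) → ℂ :=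
  convList d ((List.ofFn fun i => List.replicate (k i) (w i)).flatten)

/-- The majorizing function `F_M(r) = ∑_k |a_k| r^{|k|}`, `|k| = k₁ + ⋯ + k_n`. -/
noncomputable def FM (n : ℕ) (a : (Fin n → ℕ) → ℂ) (r : ℝ) : ℝ≥0∞ :=
  ∑' k : Fin n → ℕ, ENNReal.ofReal ‖a k‖ * ENNReal.ofReal r ^ (∑ i, k i)

/-- The radius `R_M = sup {r ≥ 0 : F_M(r) < ∞}`. -/
noncomputable def RM (n : ℕ) (a : (Fin n → ℕ) → ℂ) : ℝ≥0∞ :=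
  ⨆ r : {r : ℝ // 0 ≤ r ∧ FM n a r < ⊤}, ENNReal.ofReal r.1

lemma ofReal_exp_mul_norm_le_mul {E : Type*} [SeminormedAddGroup E] {γ : ℝ} (hγ : 0 ≤ γ)
    (x y : E) :
    ENNReal.ofReal (Real.exp (γ * ‖x‖)) ≤
      ENNReal.ofReal (Real.exp (γ * ‖x - y‖)) * ENNReal.ofReal (Real.exp (γ * ‖y‖)) := by
  rw [← ENNReal.ofReal_mul (Real.exp_nonneg _), ← Real.exp_add, ← mul_add]
  gcongr
  simpa using norm_add_le (x - y) y

section Convolution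

variable {d : ℕ}

lemma measurable_convE {u v : EuclideanSpace ℝ (Fin d) → ℂ}
    (hu : Measurable u) (hv : Measurable v) : Measurable (convE d u v) := by
  have : Measurable fun p : EuclideanSpace ℝ (Fin d) × EuclideanSpace ℝ (Fin d) =>
      u (p.1 - p.2) * v p.2 :=
    (hu.comp (measurable_fst.sub measurable_snd)).mul (hv.comp measurable_snd)
  exact this.stronglyMeasurable.integral_prod_right'.measurable

lemma coe_nnnorm_convE_le (u v : EuclideanSpace ℝ (Fin d) → ℂ) (ξ : EuclideanSpace ℝ (Fin d)) :
    (‖convE d u v ξ‖₊ : ℝ≥0∞) ≤ ∫⁻ η, (‖u (ξ - η)‖₊ : ℝ≥0∞) * ‖v η‖₊ :=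
  calc (‖convE d u v ξ‖₊ : ℝ≥0∞) ≤ ∫⁻ η, ‖u (ξ - η) * v η‖₊ :=
        enorm_integral_le_lintegral_enorm _
    _ = ∫⁻ η, (‖u (ξ - η)‖₊ : ℝ≥0∞) * ‖v η‖₊ := by simp [nnnorm_mul, ENNReal.coe_mul]

lemma gnorm_convE_le {γ : ℝ} (hγ : 0 ≤ γ) {u v : EuclideanSpace ℝ (Fin d) → ℂ}
    (hu : Measurable u) (hv : Measurable v) :
    gnorm d γ (convE d u v) ≤ gnorm d γ u * gnorm d γ v := by
  set e : EuclideanSpace ℝ (Fin d) → ℝ≥0∞ := fun x => ENNReal.ofReal (Real.exp (γ * ‖x‖))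
  have he : Measurable e := (measurable_norm.const_mul γ).exp.ennreal_ofReal
  set g : EuclideanSpace ℝ (Fin d) → ℝ≥0∞ := fun x => e x * ‖u x‖₊
  set h : EuclideanSpace ℝ (Fin d) → ℝ≥0∞ := fun x => e x * ‖v x‖₊
  have hg : Measurable g := he.mul hu.nnnorm.coe_nnreal_ennreal
  have hh : Measurable h := he.mul hv.nnnorm.coe_nnreal_ennreal
  calc gnorm d γ (convE d u v)
      ≤ ∫⁻ ξ, ∫⁻ η, e ξ * ((‖u (ξ - η)‖₊ : ℝ≥0∞) * ‖v η‖₊) := by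
        refine lintegral_mono fun ξ => ?_
        rw [lintegral_const_mul' _ _ ENNReal.ofReal_ne_top]
        exact mul_le_mul_right (coe_nnnorm_convE_le u v ξ) _
    _ ≤ ∫⁻ ξ, ∫⁻ η, g (ξ - η) * h η := by
        refine lintegral_mono fun ξ => lintegral_mono fun η => ?_
        calc e ξ * ((‖u (ξ - η)‖₊ : ℝ≥0∞) * ‖v η‖₊)
            ≤ (e (ξ - η) * e η) * ((‖u (ξ - η)‖₊ : ℝ≥0∞) * ‖v η‖₊) :=
              mul_le_mul_left (ofReal_exp_mul_norm_le_mul hγ ξ η) _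
          _ = g (ξ - η) * h η := by ring
    _ = ∫⁻ η, ∫⁻ ξ, g (ξ - η) * h η :=
        lintegral_lintegral_swap
          ((hg.comp (measurable_fst.sub measurable_snd)).mul (hh.comp measurable_snd)).aemeasurable
    _ = ∫⁻ η, gnorm d γ u * h η := by
        refine lintegral_congr fun η => ?_
        refine (lintegral_mul_const _ (hg.comp (measurable_sub_const η))).trans ?_
        exact congrArg (· * h η) (lintegral_sub_right_eq_self g η)
    _ = gnorm d γ u * gnorm d γ v := lintegral_const_mul _ hh

lemma measurable_convList {l : List (EuclideanSpace ℝ (Fin d) → ℂ)}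
    (hl : ∀ f ∈ l, Measurable f) : Measurable (convList d l) := by
  induction l using convList.induct with
  | case1 => exact measurable_const
  | case2 f => exact hl f (by simp)
  | case3 f g rest ih =>
    exact measurable_convE (hl f (by simp)) (ih fun f' hf' => hl f' (by simp [hf']))

lemma gnorm_convList_le {γ : ℝ} (hγ : 0 ≤ γ) {l : List (EuclideanSpace ℝ (Fin d) → ℂ)}
    (hl : ∀ f ∈ l, Measurable f) : gnorm d γ (convList d l) ≤ (l.map (gnorm d γ)).prod := by
  induction l using convList.induct with
  | case1 => simp [convList, gnorm]
  | case2 f => simp [convList]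
  | case3 f g rest ih =>
    have hrest : ∀ f' ∈ g :: rest, Measurable f' := fun f' hf' => hl f' (by simp [hf'])
    calc gnorm d γ (convList d (f :: g :: rest))
        ≤ gnorm d γ f * gnorm d γ (convList d (g :: rest)) :=
          gnorm_convE_le hγ (hl f (by simp)) (measurable_convList hrest)
      _ ≤ gnorm d γ f * ((g :: rest).map (gnorm d γ)).prod := mul_le_mul_right (ih hrest) _
      _ = ((f :: g :: rest).map (gnorm d γ)).prod := by simp

lemma gnorm_multiConv_le {n : ℕ} {γ : ℝ} (hγ : 0 ≤ γ) {w : Fin n → EuclideanSpace ℝ (Fin d) → ℂ}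
    (hw : ∀ i, Measurable (w i)) (k : Fin n → ℕ) :
    gnorm d γ (multiConv d n w k) ≤ ∏ i, gnorm d γ (w i) ^ k i := by
  have hmeas : ∀ f ∈ (List.ofFn fun i => List.replicate (k i) (w i)).flatten, Measurable f := by
    simp only [List.mem_flatten, List.mem_ofFn]
    rintro f ⟨_, ⟨i, rfl⟩, hf⟩
    rw [List.eq_of_mem_replicate hf]
    exact hw i
  calc gnorm d γ (multiConv d n w k)
      ≤ (((List.ofFn fun i => List.replicate (k i) (w i)).flatten).map (gnorm d γ)).prod :=
        gnorm_convList_le hγ hmeas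
    _ = ∏ i, gnorm d γ (w i) ^ k i := by
        simp [List.map_flatten, List.map_ofFn, Function.comp_def, List.prod_flatten,
          List.prod_ofFn]

end Convolution

lemma FM_mono {n : ℕ} (a : (Fin n → ℕ) → ℂ) {r s : ℝ} (hrs : ENNReal.ofReal r ≤ ENNReal.ofReal s) :
    FM n a r ≤ FM n a s :=
  ENNReal.tsum_le_tsum fun _ => mul_le_mul_right (pow_le_pow_left₀ zero_le hrs _) _

lemma FM_lt_top_of_lt_RM {n : ℕ} {a : (Fin n → ℕ) → ℂ} {R : ℝ}
    (hRM : ENNReal.ofReal R < RM n a) : FM n a R < ⊤ := by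
  obtain ⟨⟨r, hr⟩, hRr⟩ := lt_iSup_iff.mp hRM
  exact (FM_mono a hRr.le).trans_lt hr.2

theorem stmt5_general (d n : ℕ) (γ : ℝ) (hγ : 0 ≤ γ)
    (a : (Fin n → ℕ) → ℂ)
    (R : ℝ) (hRM : ENNReal.ofReal R < RM n a)
    (w : Fin n → EuclideanSpace ℝ (Fin d) → ℂ)
    (hw : ∀ i, Measurable (w i))
    (hwn : ∀ i, gnorm d γ (w i) ≤ ENNReal.ofReal R) :
    (∑' k : {k : Fin n → ℕ // k ≠ 0},
        ENNReal.ofReal ‖a k.1‖ * gnorm d γ (multiConv d n w k.1))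
      ≤ FM n a R ∧ FM n a R < ⊤ := by
  have hconv (k : Fin n → ℕ) : gnorm d γ (multiConv d n w k) ≤ ENNReal.ofReal R ^ (∑ i, k i) :=
    calc gnorm d γ (multiConv d n w k) ≤ ∏ i, gnorm d γ (w i) ^ k i := gnorm_multiConv_le hγ hw k
      _ ≤ ∏ i, ENNReal.ofReal R ^ k i :=
          Finset.prod_le_prod' fun i _ => pow_le_pow_left₀ zero_le (hwn i) _
      _ = ENNReal.ofReal R ^ (∑ i, k i) := Finset.prod_pow_eq_pow_sum _ _ _
  refine ⟨?_, FM_lt_top_of_lt_RM hRM⟩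
  calc (∑' k : {k : Fin n → ℕ // k ≠ 0},
        ENNReal.ofReal ‖a k.1‖ * gnorm d γ (multiConv d n w k.1))
      ≤ ∑' k : {k : Fin n → ℕ // k ≠ 0},
        ENNReal.ofReal ‖a k.1‖ * ENNReal.ofReal R ^ (∑ i, k.1 i) :=
        ENNReal.tsum_le_tsum fun k => mul_le_mul_right (hconv k.1) _
    _ ≤ FM n a R :=
        ENNReal.tsum_comp_le_tsum_of_injective Subtype.val_injective
          (fun k => ENNReal.ofReal ‖a k‖ * ENNReal.ofReal R ^ (∑ i, k i))

/-- first part of Lemma 4.8: with `a(0) = 0`, `0 ≤ R < R_M` and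
`‖w_i‖_γ ≤ R` for each `i`,
`∑_{k ≠ 0} |a_k| ‖w₁^{*k₁} * ⋯ * w_n^{*k_n}‖_γ ≤ F_M(R) < ∞`. -/
theorem stmt5 (d n : ℕ) (hd : 1 ≤ d) (hn : 1 ≤ n) (γ : ℝ) (hγ : 0 ≤ γ)
    (a : (Fin n → ℕ) → ℂ) (ha0 : a 0 = 0)
    (R : ℝ) (hR : 0 ≤ R) (hRM : ENNReal.ofReal R < RM n a)
    (w : Fin n → EuclideanSpace ℝ (Fin d) → ℂ)
    (hw : ∀ i, Measurable (w i))
    (hwn : ∀ i, gnorm d γ (w i) ≤ ENNReal.ofReal R) :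
    (∑' k : {k : Fin n → ℕ // k ≠ 0},
        ENNReal.ofReal ‖a k.1‖ * gnorm d γ (multiConv d n w k.1))
      ≤ FM n a R ∧ FM n a R < ⊤ :=
  stmt5_general d n γ hγ a R hRM w hw hwn
end

section
/- For every κ > 0 there exists a constant C ≥ 1, depending only on κ, such that for every real β ≥ 1 the series ∑_{j∈ℤ} 2^{jβ} exp(−2^{jκ}) converges and ∑_{j∈ℤ} 2^{jβ} exp(−2^{jκ}) ≤ 2 C^{β/κ} β^{β/κ}. -/
/-!
Put `p = β / κ` and `x = 2 ^ (j κ)`, so that the `j`-th term is `x ^ p e^{-x}`. Splitting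
`e^{-x} = e^{-x/2} e^{-x/2}`, the elementary bound `x ^ p e^{-x/2} ≤ (2p) ^ p` leaves the factor
`e^{-2^{jκ}/2}`, which decays geometrically in `j ≥ 0` by Bernoulli's inequality. For `j < 0` the
terms are at most `2 ^ j` since `β ≥ 1`. Hence the series is at most `(2p) ^ p / (1 - ρ) + 1` for a
ratio `ρ < 1` depending only on `κ`; here `(2p) ^ p = ((2/κ) β) ^ p`, and `1/(1 - ρ)` is absorbed
as `(1 - ρ) ^ {-κ p} = (1 - ρ) ^ {-β}`.
-/

open Real

noncomputable def dyadicTerm (κ β : ℝ) (j : ℤ) : ℝ :=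
  (2 : ℝ) ^ ((j : ℝ) * β) * exp (-(2 : ℝ) ^ ((j : ℝ) * κ))

lemma dyadicTerm_nonneg (κ β : ℝ) (j : ℤ) : 0 ≤ dyadicTerm κ β j := by
  unfold dyadicTerm; positivity

lemma Real.rpow_mul_exp_neg_half_le {x p : ℝ} (hx : 0 ≤ x) (hp : 0 < p) :
    x ^ p * exp (-x / 2) ≤ (2 * p) ^ p := by
  have hx_le : x ≤ 2 * p * exp (x / (2 * p)) := by
    have := add_one_le_exp (x / (2 * p))
    have : x = 2 * p * (x / (2 * p)) := by field_simp
    nlinarith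
  calc x ^ p * exp (-x / 2)
      ≤ (2 * p * exp (x / (2 * p))) ^ p * exp (-x / 2) := by gcongr
    _ = (2 * p) ^ p * (exp (x / 2) * exp (-x / 2)) := by
        rw [mul_rpow (by positivity) (exp_pos _).le, ← exp_mul,
          show x / (2 * p) * p = x / 2 by field_simp]
        ring
    _ = (2 * p) ^ p := by rw [← exp_add, show x / 2 + -x / 2 = 0 by ring, exp_zero, mul_one]

lemma Real.exp_neg_pow_div_two_le {t : ℝ} (ht : -1 ≤ t) (n : ℕ) :
    exp (-t ^ n / 2) ≤ exp (-(t - 1) / 2) ^ n := by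
  rw [← exp_nat_mul, exp_le_exp]
  have := one_add_mul_le_pow (show (-2 : ℝ) ≤ t - 1 by linarith) n
  rw [add_sub_cancel] at this
  nlinarith

lemma summable_and_tsum_le_of_nat_of_neg_add_one {f : ℤ → ℝ} {a b : ℕ → ℝ}
    (hf : ∀ j, 0 ≤ f j) (ha : Summable a) (hb : Summable b)
    (hfa : ∀ n : ℕ, f n ≤ a n) (hfb : ∀ n : ℕ, f (-(n + 1)) ≤ b n) :
    Summable f ∧ ∑' j, f j ≤ ∑' n, a n + ∑' n, b n := by
  have hf₁ : Summable fun n : ℕ => f n := ha.of_nonneg_of_le (fun _ => hf _) hfa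
  have hf₂ : Summable fun n : ℕ => f (-(n + 1)) := hb.of_nonneg_of_le (fun _ => hf _) hfb
  refine ⟨hf₁.of_nat_of_neg_add_one hf₂, ?_⟩
  rw [tsum_of_nat_of_neg_add_one hf₁ hf₂]
  exact add_le_add (hf₁.tsum_le_tsum hfa ha) (hf₂.tsum_le_tsum hfb hb)

lemma dyadicTerm_eq {κ : ℝ} (hκ : κ ≠ 0) (β : ℝ) (j : ℤ) :
    dyadicTerm κ β j = ((2 : ℝ) ^ ((j : ℝ) * κ)) ^ (β / κ) * exp (-(2 : ℝ) ^ ((j : ℝ) * κ)) := by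
  rw [dyadicTerm, ← rpow_mul zero_le_two, mul_assoc, mul_div_cancel₀ β hκ]

lemma dyadicTerm_natCast_le {κ β : ℝ} (hκ : 0 < κ) (hβ : 0 < β) (n : ℕ) :
    dyadicTerm κ β n ≤ (2 * (β / κ)) ^ (β / κ) * exp (-((2 : ℝ) ^ κ - 1) / 2) ^ n := by
  set x := (2 : ℝ) ^ ((n : ℝ) * κ)
  have hx : x = ((2 : ℝ) ^ κ) ^ n := by
    rw [← rpow_natCast, ← rpow_mul zero_le_two, mul_comm]
  have h2κ : -1 ≤ (2 : ℝ) ^ κ := by linarith [rpow_pos_of_pos two_pos κ]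
  calc dyadicTerm κ β n = x ^ (β / κ) * exp (-x / 2) * exp (-x / 2) := by
        rw [dyadicTerm_eq hκ.ne', mul_assoc, ← exp_add, show -x / 2 + -x / 2 = -x by ring]
        simp only [Int.cast_natCast, x]
    _ ≤ (2 * (β / κ)) ^ (β / κ) * exp (-((2 : ℝ) ^ κ - 1) / 2) ^ n := by
        gcongr
        · exact rpow_mul_exp_neg_half_le (by positivity) (by positivity)
        · rw [hx]; exact exp_neg_pow_div_two_le h2κ n

lemma dyadicTerm_neg_add_one_le (κ : ℝ) {β : ℝ} (hβ : 1 ≤ β) (n : ℕ) :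
    dyadicTerm κ β (-(n + 1)) ≤ 1 / 2 / 2 ^ n := by
  calc dyadicTerm κ β (-(n + 1)) ≤ (2 : ℝ) ^ (-((n : ℝ) + 1) * β) * 1 := by
        unfold dyadicTerm; push_cast
        gcongr
        rw [exp_le_one_iff, neg_nonpos]; positivity
    _ ≤ (2 : ℝ) ^ (-((n : ℝ) + 1)) := by
        rw [mul_one]
        gcongr
        · norm_num
        · nlinarith [n.cast_nonneg (α := ℝ)]
    _ = 1 / 2 / 2 ^ n := by
        rw [rpow_neg zero_le_two, rpow_add_one two_ne_zero, rpow_natCast]; ring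

lemma two_mul_div_rpow_mul_add_one_le {κ β D : ℝ} (hκ : 0 < κ) (hβ : 1 ≤ β) (hD : 1 ≤ D) :
    (2 * (β / κ)) ^ (β / κ) * D + 1 ≤ 2 * (D ^ κ * max 1 (2 / κ)) ^ (β / κ) * β ^ (β / κ) := by
  set E := max 1 (2 / κ)
  have hp : 0 ≤ β / κ := by positivity
  have hmain : (D ^ κ * E) ^ (β / κ) * β ^ (β / κ) = D ^ β * (E * β) ^ (β / κ) := by
    rw [mul_rpow (by positivity) (by positivity), ← rpow_mul (by positivity),
      mul_div_cancel₀ β hκ.ne', mul_rpow (by positivity) (by positivity)]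
    ring
  have hEβ : 1 ≤ (E * β) ^ (β / κ) :=
    one_le_rpow (one_le_mul_of_one_le_of_one_le (le_max_left _ _) hβ) hp
  have h2p : (2 * (β / κ)) ^ (β / κ) ≤ (E * β) ^ (β / κ) := by
    rw [show 2 * (β / κ) = 2 / κ * β by ring]
    gcongr
    exact le_max_right _ _
  have hDβ : D ≤ D ^ β := by
    simpa using rpow_le_rpow_of_exponent_le hD hβ
  have hD1 : 1 ≤ D ^ β := hD.trans hDβ
  rw [mul_assoc, hmain]
  nlinarith [mul_le_mul h2p hDβ (by linarith) (by positivity)]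

/-- For every `κ > 0` there exists `C ≥ 1`, depending only on `κ`,
such that for every real `β ≥ 1` the series `∑_{j∈ℤ} 2^{jβ} exp(−2^{jκ})` converges and
is bounded by `2 C^{β/κ} β^{β/κ}`. -/
theorem stmt14 (κ : ℝ) (hκ : 0 < κ) :
    ∃ C : ℝ, 1 ≤ C ∧ ∀ β : ℝ, 1 ≤ β →
      Summable (fun j : ℤ => (2 : ℝ) ^ ((j : ℝ) * β) * Real.exp (-(2 : ℝ) ^ ((j : ℝ) * κ))) ∧
      (∑' j : ℤ, (2 : ℝ) ^ ((j : ℝ) * β) * Real.exp (-(2 : ℝ) ^ ((j : ℝ) * κ)))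
        ≤ 2 * C ^ (β / κ) * β ^ (β / κ) := by
  set ρ := exp (-((2 : ℝ) ^ κ - 1) / 2)
  have hρ0 : 0 ≤ ρ := (exp_pos _).le
  have hρ1 : ρ < 1 := by
    rw [exp_lt_one_iff, neg_div, neg_lt_zero]
    exact half_pos (sub_pos.2 (one_lt_rpow one_lt_two hκ))
  have hD : 1 ≤ (1 - ρ)⁻¹ := one_le_inv₀ (by linarith) |>.2 (by linarith)
  refine ⟨(1 - ρ)⁻¹ ^ κ * max 1 (2 / κ), ?_, fun β hβ => ?_⟩
  · exact one_le_mul_of_one_le_of_one_le (one_le_rpow hD hκ.le) (le_max_left _ _)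
  obtain ⟨hsum, hle⟩ := summable_and_tsum_le_of_nat_of_neg_add_one (dyadicTerm_nonneg κ β)
    ((summable_geometric_of_lt_one hρ0 hρ1).mul_left _) (summable_geometric_two' 1)
    (dyadicTerm_natCast_le hκ (by linarith)) (dyadicTerm_neg_add_one_le κ hβ)
  refine ⟨hsum, hle.trans ?_⟩
  rw [tsum_mul_left, tsum_geometric_of_lt_one hρ0 hρ1, tsum_geometric_two']
  exact two_mul_div_rpow_mul_add_one_le hκ hβ hD
end
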